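/- If W_ξ(c̄) < 0 for some threshold vector c̄ ∈ ℝ^m, then p(c̄) := c̄ + W_ξ(c̄)·(1,...,1) is a weak Pareto maximum of S(ξ). -/

import Mathlib

/-- Trajectory of the discrete-time control system `x_{k+1} = F_k(x_k, u_k, ω_k)`, `x_0 = ξ`. -/
def traj {X U W : Type*} (F : ℕ → X → U → W → X) (ξ : X) (u : ℕ → U) (w : ℕ → W) : ℕ → X
  | 0 => ξ
  | k + 1 => F k (traj F ξ u w k) (u k) (w k)

/-- `u` is admissible for `(ξ, c)`: for every scenario, the mixed and end-point
constraints hold (componentwise, thresholds `c`). -/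
def Adm {X U W : Type*} {m : ℕ} (N : ℕ) (F : ℕ → X → U → W → X) (Ω : ℕ → Set W)
    (g : ℕ → X → U → Fin m → ℝ) (θ : X → Fin m → ℝ) (ξ : X) (c : Fin m → ℝ)
    (u : ℕ → U) : Prop :=
  ∀ w : ℕ → W, (∀ k, w k ∈ Ω k) →
    (∀ k ≤ N, c ≤ g k (traj F ξ u w k) (u k)) ∧ c ≤ θ (traj F ξ u w (N + 1))

/-- The set of robust sustainable thresholds `S(ξ)`. -/
def SST {X U W : Type*} {m : ℕ} (N : ℕ) (F : ℕ → X → U → W → X) (Ω : ℕ → Set W)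
    (g : ℕ → X → U → Fin m → ℝ) (θ : X → Fin m → ℝ) (ξ : X) : Set (Fin m → ℝ) :=
  {c | ∃ u : ℕ → U, Adm N F Ω g θ ξ c u}


/-- The level-set cost `J^c(u) = inf_w min{ min_{k≤N} Φ^c_k(x_k,u_k), Θ^c(x_{N+1}) }`,
where `Φ^c_k(x,u) = min_i (g^k_i(x,u) - c_i)` and `Θ^c(x) = min_i (θ_i(x) - c_i)`. -/
noncomputable def Jfun {X U W : Type*} {m : ℕ} [NeZero m] (N : ℕ)
    (F : ℕ → X → U → W → X) (Ω : ℕ → Set W)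
    (g : ℕ → X → U → Fin m → ℝ) (θ : X → Fin m → ℝ) (ξ : X) (c : Fin m → ℝ)
    (u : ℕ → U) : ℝ :=
  ⨅ w : {w : ℕ → W // ∀ k, w k ∈ Ω k},
    min ((Finset.Icc 0 N).inf' (Finset.nonempty_Icc.2 (Nat.zero_le N))
          fun k => ⨅ i, (g k (traj F ξ u w.1 k) (u k) i - c i))
        (⨅ i, (θ (traj F ξ u w.1 (N + 1)) i - c i))

/-- The level-set value `W_ξ(c) = max_u J^c(u)`. -/
noncomputable def Wval {X U W : Type*} {m : ℕ} [NeZero m] (N : ℕ)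
    (F : ℕ → X → U → W → X) (Ω : ℕ → Set W)
    (g : ℕ → X → U → Fin m → ℝ) (θ : X → Fin m → ℝ) (ξ : X) (c : Fin m → ℝ) : ℝ :=
  sSup (Set.range (Jfun N F Ω g θ ξ c))

/-! The level-set value is attained: `J^c` is upper semicontinuous on the compact space of
control sequences, because its superlevel set `{u | t ≤ J^c(u)}` is the set of controls admissible
for the shifted thresholds `c + t·1`, which is closed. With `u₀` an optimal control for `c̄`,
`u₀` is then admissible for `p(c̄) = c̄ + W(c̄)·1`. A threshold `c ∈ S(ξ)` strictly above `p(c̄)`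
would satisfy `c ≥ c̄ + t·1` with `t := minᵢ (cᵢ - c̄ᵢ) > W(c̄)`, and an admissible control for it
would have `J^{c̄} ≥ t > W(c̄)`, which is impossible. -/

section LevelSet

variable {X U W : Type*} {m N : ℕ} {F : ℕ → X → U → W → X} {Ω : ℕ → Set W}
  {g : ℕ → X → U → Fin m → ℝ} {θ : X → Fin m → ℝ} {ξ : X}

theorem Adm.mono {c c' : Fin m → ℝ} {u : ℕ → U} (h : Adm N F Ω g θ ξ c u) (hc : c' ≤ c) :
    Adm N F Ω g θ ξ c' u := fun w hw =>
  ⟨fun k hk => hc.trans ((h w hw).1 k hk), hc.trans (h w hw).2⟩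

theorem continuous_traj [TopologicalSpace X] [TopologicalSpace U]
    (hF : ∀ k, ∀ ω ∈ Ω k, Continuous fun p : X × U => F k p.1 p.2 ω)
    {w : ℕ → W} (hw : ∀ k, w k ∈ Ω k) (k : ℕ) :
    Continuous fun u : ℕ → U => traj F ξ u w k := by
  induction k with
  | zero => exact continuous_const
  | succ k ih => exact (hF k (w k) (hw k)).comp (ih.prodMk (continuous_apply k))

theorem isClosed_setOf_adm [TopologicalSpace X] [TopologicalSpace U]
    (hF : ∀ k, ∀ ω ∈ Ω k, Continuous fun p : X × U => F k p.1 p.2 ω)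
    (hg_usc : ∀ k i, UpperSemicontinuous fun p : X × U => g k p.1 p.2 i)
    (hθ_usc : ∀ i, UpperSemicontinuous fun x => θ x i) (c : Fin m → ℝ) :
    IsClosed {u | Adm N F Ω g θ ξ c u} := by
  simp only [Adm, Pi.le_def, Set.ofPred_forall, Set.ofPred_and]
  refine isClosed_iInter fun w => isClosed_iInter fun hw =>
    (isClosed_iInter fun k => isClosed_iInter fun _ => isClosed_iInter fun i => ?_).inter
      (isClosed_iInter fun i => ?_)
  · exact (hg_usc k i).isClosed_preimage (c i) |>.preimage
      ((continuous_traj hF hw k).prodMk (continuous_apply k))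
  · exact (hθ_usc i).isClosed_preimage (c i) |>.preimage (continuous_traj hF hw (N + 1))

variable [NeZero m]

variable (N F g θ ξ) in
/-- `min{ minₖ Φ^c_k(x_k,u_k), Θ^c(x_{N+1}) }` along the scenario `w`. -/
noncomputable def margin (c : Fin m → ℝ) (u : ℕ → U) (w : ℕ → W) : ℝ :=
  min ((Finset.Icc 0 N).inf' (Finset.nonempty_Icc.2 (Nat.zero_le N))
        fun k => ⨅ i, (g k (traj F ξ u w k) (u k) i - c i))
      (⨅ i, (θ (traj F ξ u w (N + 1)) i - c i))

theorem Jfun_eq_iInf_margin (c : Fin m → ℝ) (u : ℕ → U) :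
    Jfun N F Ω g θ ξ c u = ⨅ w : {w : ℕ → W // ∀ k, w k ∈ Ω k}, margin N F g θ ξ c u w :=
  rfl

theorem le_margin_iff {c : Fin m → ℝ} {u : ℕ → U} {w : ℕ → W} {t : ℝ} :
    t ≤ margin N F g θ ξ c u w ↔
      (∀ k ≤ N, (fun i => c i + t) ≤ g k (traj F ξ u w k) (u k)) ∧
        (fun i => c i + t) ≤ θ (traj F ξ u w (N + 1)) := by
  simp only [margin, le_min_iff, Finset.le_inf'_iff, Finset.mem_Icc, zero_le, true_and,
    le_ciInf_iff (Set.finite_range _).bddBelow, Pi.le_def, le_sub_iff_add_le']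

-- `⨅` of a family unbounded below is `0` in `ℝ`; this bound makes `Jfun` a genuine infimum.
theorem bddBelow_range_margin
    (hg_bdd : ∀ k i, BddBelow (Set.range fun p : X × U => g k p.1 p.2 i))
    (hθ_bdd : ∀ i, BddBelow (Set.range fun x => θ x i)) (c : Fin m → ℝ) (u : ℕ → U) :
    BddBelow (Set.range fun w : {w : ℕ → W // ∀ k, w k ∈ Ω k} => margin N F g θ ξ c u w) := by
  choose Lg hLg using hg_bdd
  choose Lθ hLθ using hθ_bdd
  obtain ⟨Mg, hMg⟩ :=
    ((Set.finite_Iic N).image2 (fun k i => Lg k i - c i) Set.finite_univ).bddBelow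
  obtain ⟨Mθ, hMθ⟩ := (Set.finite_range fun i => Lθ i - c i).bddBelow
  refine ⟨min Mg Mθ, ?_⟩
  rintro _ ⟨w, rfl⟩
  refine le_margin_iff.2 ⟨fun k hk i => ?_, fun i => ?_⟩
  · have hM := hMg (Set.mem_image2_of_mem (Set.mem_Iic.2 hk) (Set.mem_univ i))
    have hL := hLg k i ⟨(traj F ξ u w.1 k, u k), rfl⟩
    dsimp only at hM hL ⊢
    linarith [min_le_left Mg Mθ]
  · have hM := hMθ ⟨i, rfl⟩
    have hL := hLθ i ⟨traj F ξ u w.1 (N + 1), rfl⟩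
    dsimp only at hM hL ⊢
    linarith [min_le_right Mg Mθ]

theorem le_Jfun_iff_adm (hΩ : ∀ k, (Ω k).Nonempty)
    (hg_bdd : ∀ k i, BddBelow (Set.range fun p : X × U => g k p.1 p.2 i))
    (hθ_bdd : ∀ i, BddBelow (Set.range fun x => θ x i)) {c : Fin m → ℝ} {u : ℕ → U} {t : ℝ} :
    t ≤ Jfun N F Ω g θ ξ c u ↔ Adm N F Ω g θ ξ (fun i => c i + t) u := by
  choose ω hω using hΩ
  have : Nonempty {w : ℕ → W // ∀ k, w k ∈ Ω k} := ⟨⟨ω, hω⟩⟩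
  rw [Jfun_eq_iInf_margin, le_ciInf_iff (bddBelow_range_margin hg_bdd hθ_bdd c u)]
  simp only [Adm, Subtype.forall, le_margin_iff]

theorem exists_isGreatest_range_Jfun [TopologicalSpace X] [TopologicalSpace U] [CompactSpace U]
    [Nonempty U] (hΩ : ∀ k, (Ω k).Nonempty)
    (hF : ∀ k, ∀ ω ∈ Ω k, Continuous fun p : X × U => F k p.1 p.2 ω)
    (hg_usc : ∀ k i, UpperSemicontinuous fun p : X × U => g k p.1 p.2 i)
    (hg_bdd : ∀ k i, BddBelow (Set.range fun p : X × U => g k p.1 p.2 i))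
    (hθ_usc : ∀ i, UpperSemicontinuous fun x => θ x i)
    (hθ_bdd : ∀ i, BddBelow (Set.range fun x => θ x i)) (c : Fin m → ℝ) :
    ∃ u, IsGreatest (Set.range (Jfun N F Ω g θ ξ c)) (Jfun N F Ω g θ ξ c u) := by
  have husc : UpperSemicontinuous (Jfun N F Ω g θ ξ c) := by
    refine upperSemicontinuous_iff_isClosed_preimage.2 fun t => ?_
    simpa only [Set.preimage, Set.mem_Ici, le_Jfun_iff_adm hΩ hg_bdd hθ_bdd]
      using isClosed_setOf_adm hF hg_usc hθ_usc (fun i => c i + t)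
  obtain ⟨u, -, hu⟩ :=
    (husc.upperSemicontinuousOn _).exists_isMaxOn Set.univ_nonempty isCompact_univ
  exact ⟨u, ⟨u, rfl⟩, Set.forall_mem_range.2 fun v => hu (Set.mem_univ v)⟩

end LevelSet

theorem stmt12_general {X U W : Type*} [NormedAddCommGroup X]
    [MetricSpace U] [CompactSpace U] [Nonempty U]
    {m N : ℕ} [NeZero m] (F : ℕ → X → U → W → X) (Ω : ℕ → Set W)
    (hΩ : ∀ k, (Ω k).Nonempty)
    (g : ℕ → X → U → Fin m → ℝ) (θ : X → Fin m → ℝ)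
    (hF : ∀ k, ∀ ω ∈ Ω k, Continuous fun p : X × U => F k p.1 p.2 ω)
    (hg_usc : ∀ k i, UpperSemicontinuous fun p : X × U => g k p.1 p.2 i)
    (hg_bdd : ∀ k i, BddBelow (Set.range fun p : X × U => g k p.1 p.2 i))
    (hθ_usc : ∀ i, UpperSemicontinuous fun x => θ x i)
    (hθ_bdd : ∀ i, BddBelow (Set.range fun x => θ x i))
    (ξ : X)
    (cbar : Fin m → ℝ) :
    (fun i => cbar i + Wval N F Ω g θ ξ cbar) ∈ SST N F Ω g θ ξ ∧
    ¬ ∃ c ∈ SST N F Ω g θ ξ, ∀ i,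
      cbar i + Wval N F Ω g θ ξ cbar < c i := by
  obtain ⟨u₀, hmax⟩ := exists_isGreatest_range_Jfun hΩ hF hg_usc hg_bdd hθ_usc hθ_bdd cbar
  have hW : Wval N F Ω g θ ξ cbar = Jfun N F Ω g θ ξ cbar u₀ := hmax.csSup_eq
  refine ⟨⟨u₀, (le_Jfun_iff_adm hΩ hg_bdd hθ_bdd).1 hW.le⟩, ?_⟩
  rintro ⟨c, ⟨u, hu⟩, hlt⟩
  obtain ⟨i₀, hi₀⟩ := Finite.exists_min fun i => c i - cbar i
  have hJ : c i₀ - cbar i₀ ≤ Jfun N F Ω g θ ξ cbar u :=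
    (le_Jfun_iff_adm hΩ hg_bdd hθ_bdd).2 (hu.mono fun i => by linarith [hi₀ i])
  linarith [hmax.2 ⟨u, rfl⟩, hlt i₀]

theorem stmt12 {X U W : Type*} [NormedAddCommGroup X] [NormedSpace ℝ X]
    [FiniteDimensional ℝ X] [MetricSpace U] [CompactSpace U] [Nonempty U]
    {m N : ℕ} [NeZero m] (F : ℕ → X → U → W → X) (Ω : ℕ → Set W)
    (hΩ : ∀ k, (Ω k).Nonempty)
    (g : ℕ → X → U → Fin m → ℝ) (θ : X → Fin m → ℝ)
    (hF : ∀ k, ∀ ω ∈ Ω k, Continuous fun p : X × U => F k p.1 p.2 ω)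
    (hg_usc : ∀ k i, UpperSemicontinuous fun p : X × U => g k p.1 p.2 i)
    (hg_bdd : ∀ k i, BddBelow (Set.range fun p : X × U => g k p.1 p.2 i))
    (hθ_usc : ∀ i, UpperSemicontinuous fun x => θ x i)
    (hθ_bdd : ∀ i, BddBelow (Set.range fun x => θ x i))
    (ξ : X)
    (cbar : Fin m → ℝ) (hneg : Wval N F Ω g θ ξ cbar < 0) :
    (fun i => cbar i + Wval N F Ω g θ ξ cbar) ∈ SST N F Ω g θ ξ ∧
    ¬ ∃ c ∈ SST N F Ω g θ ξ, ∀ i,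
      cbar i + Wval N F Ω g θ ξ cbar < c i :=
  stmt12_general F Ω hΩ g θ hF hg_usc hg_bdd hθ_usc hθ_bdd ξ cbar
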